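/- Let F = ℝ or ℂ, let M(λ) ∈ F[λ]^{m×(m+n)}_d have full-Sylvester-rank, let k' = ⌈md/n⌉ and t = nk' − md, and let N(λ) ∈ F[λ]^{n×(m+n)}_{k'} be a minimal basis dual to M(λ). Then N(λ) has full-Sylvester-rank (as a polynomial matrix of degree at most k') if and only if t = 0, i.e., if and only if all the row degrees of N(λ) are equal. -/

import Mathlib

open Polynomial Matrix

noncomputable section

variable {F : Type*} [Field F]

/-- The rows of a polynomial matrix, viewed as vectors of rational functions. -/
def ratRow {p q : ℕ} (M : Matrix (Fin p) (Fin q) F[X]) (i : Fin p) :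
    Fin q → RatFunc F :=
  fun j => algebraMap F[X] (RatFunc F) (M i j)

/-- The rational vector subspace spanned by the rows of a polynomial matrix. -/
def rowSpan {p q : ℕ} (M : Matrix (Fin p) (Fin q) F[X]) :
    Submodule (RatFunc F) (Fin q → RatFunc F) :=
  Submodule.span (RatFunc F) (Set.range (ratRow M))

/-- The degree of the `i`-th row of a polynomial matrix. -/
def rowDeg {p q : ℕ} (M : Matrix (Fin p) (Fin q) F[X]) (i : Fin p) : ℕ :=
  Finset.univ.sup fun j => (M i j).natDegree

/-- The rows of `M` form a polynomial basis of the rational subspace `V` whose sum of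
row degrees is minimal among all polynomial bases of `V`. -/
def IsMinimalBasisOf {p q : ℕ} (V : Submodule (RatFunc F) (Fin q → RatFunc F))
    (M : Matrix (Fin p) (Fin q) F[X]) : Prop :=
  LinearIndependent (RatFunc F) (ratRow M) ∧ rowSpan M = V ∧
    ∀ M' : Matrix (Fin p) (Fin q) F[X],
      LinearIndependent (RatFunc F) (ratRow M') → rowSpan M' = V →
        ∑ i, rowDeg M i ≤ ∑ i, rowDeg M' i

/-- A polynomial matrix is a minimal basis if its rows form a minimal basis of the
rational subspace they span. -/
def IsMinimalBasis {p q : ℕ} (M : Matrix (Fin p) (Fin q) F[X]) : Prop :=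
  IsMinimalBasisOf (rowSpan M) M

/-- A polynomial matrix viewed as a matrix of rational functions. -/
def ratMat {p q : ℕ} (M : Matrix (Fin p) (Fin q) F[X]) :
    Matrix (Fin p) (Fin q) (RatFunc F) :=
  M.map (algebraMap F[X] (RatFunc F))

/-- The right null-space over `F(λ)` of a polynomial matrix. -/
def rightNullSpace {p q : ℕ} (M : Matrix (Fin p) (Fin q) F[X]) :
    Submodule (RatFunc F) (Fin q → RatFunc F) :=
  LinearMap.ker (Matrix.mulVecLin (ratMat M))

/-- The `k`-th Sylvester matrix of a polynomial matrix regarded as having degree at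
most `e`: the block-Toeplitz matrix with `k` block columns whose `j`-th block column
carries the coefficients `M_0, …, M_e` in block rows `j, …, j+e` and zeros elsewhere. -/
def sylv {p q : ℕ} (e k : ℕ) (M : Matrix (Fin p) (Fin q) F[X]) :
    Matrix (Fin (k + e) × Fin p) (Fin k × Fin q) F :=
  fun r c =>
    if (c.1 : ℕ) ≤ (r.1 : ℕ) ∧ (r.1 : ℕ) ≤ (c.1 : ℕ) + e then
      (M r.2 c.2).coeff ((r.1 : ℕ) - (c.1 : ℕ))
    else 0

/-- `M`, regarded as a polynomial matrix of degree at most `e`, has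
full-Sylvester-rank if every Sylvester matrix `S_k`, `k ≥ 1`, has full rank. -/
def HasFullSylvesterRank {p q : ℕ} (e : ℕ) (M : Matrix (Fin p) (Fin q) F[X]) : Prop :=
  ∀ k : ℕ, 1 ≤ k → (sylv e k M).rank = min ((k + e) * p) (k * q)

/-- The `k`-th coefficient matrix of a polynomial matrix. -/
def coeffMat {p q : ℕ} (k : ℕ) (M : Matrix (Fin p) (Fin q) F[X]) :
    Matrix (Fin p) (Fin q) F :=
  fun i j => (M i j).coeff k

/-- The highest-row-degree coefficient matrix: its `i`-th row is the coefficient of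
`λ^{d_i}` in the `i`-th row of `M`, where `d_i` is the `i`-th row degree. -/
def highRowMat {p q : ℕ} (M : Matrix (Fin p) (Fin q) F[X]) :
    Matrix (Fin p) (Fin q) F :=
  fun i j => (M i j).coeff (rowDeg M i)

/-- The `e`-reversal of a polynomial matrix: `rev_e P(λ) = λ^e P(1/λ)`. -/
def revMat {p q : ℕ} (e : ℕ) (P : Matrix (Fin p) (Fin q) F[X]) :
    Matrix (Fin p) (Fin q) F[X] :=
  fun i j => (P i j).reflect e


variable {𝕜 : Type*} [RCLike 𝕜]

/-- The spectral norm (largest singular value) of a matrix. -/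
def sNorm {a b : Type*} [Fintype a] [Fintype b] [DecidableEq b]
    (A : Matrix a b 𝕜) : ℝ :=
  ‖LinearMap.toContinuousLinearMap (Matrix.toEuclideanLin A)‖

/-- The Frobenius norm of a matrix. -/
def fNorm {a b : Type*} [Fintype a] [Fintype b] (A : Matrix a b 𝕜) : ℝ :=
  Real.sqrt (∑ i, ∑ j, ‖A i j‖ ^ 2)

/-- The `j`-th largest singular value of a matrix (`j = 1, 2, …`), via the
Courant–Fischer variational characterization. -/
def singVal {a b : Type*} [Fintype a] [Fintype b] [DecidableEq b]
    (A : Matrix a b 𝕜) (j : ℕ) : ℝ :=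
  sSup {r : ℝ | ∃ V : Submodule 𝕜 (EuclideanSpace 𝕜 b),
    Module.finrank 𝕜 V = j ∧ ∀ x ∈ V, r * ‖x‖ ≤ ‖Matrix.toEuclideanLin A x‖}

/-!
For `P` of degree at most `e`, reading the coefficients of polynomial vectors off the columns of
`S_k(P)` identifies the kernel of `S_k(P)` with the polynomial vectors of degree `< k` in the right
kernel of `P`. So the theorem is about the dimensions of these spaces for `P = M` and `P = N`.

Full Sylvester rank of `M` makes its rows independent modulo every polynomial `g` (a dependency
`y` modulo `g` yields the left null vector `(λⁱ y)ᵢ` of `S_k(M)` over `F[λ]/(g)`) and makes its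
degree-`d` coefficient matrix of full row rank. Minimality of `N` gives the same two properties
for `N` with its row degrees, since otherwise one row could be replaced by a vector of smaller
degree. For such a dual pair the polynomial kernel of each matrix is spanned by the rows of the
other, and the predictable-degree property counts its elements of degree `< k`: `m (k - d)` for
`N`, `∑ᵢ (k - deg Nᵢ)` for `M`. Hence `rank S_k(N) = k (m + n) - m (k - d)⁺`, while large `k`
and full Sylvester rank of `M` give `∑ᵢ deg Nᵢ = m d`. Full Sylvester rank of `N` then says
`n k' = m d`, which is `t = 0`, and since every row degree of `N` is at most `k'` this happens
exactly when all of them are equal.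
-/

lemma mul_mem_degreeLT_of_mem_degreeLT_sub {p r : F[X]} {e k : ℕ} (hp : p.natDegree ≤ e)
    (hr : r ∈ F[X]_(k - e)) : p * r ∈ F[X]_k := by
  rcases eq_or_ne r 0 with rfl | hr0
  · simp
  rw [mem_degreeLT, ← natDegree_lt_iff_degree_lt hr0] at hr
  refine mem_degreeLT.2 (degree_le_natDegree.trans_lt ?_)
  exact_mod_cast natDegree_mul_le.trans_lt (by omega)

lemma natDegree_le_rowDeg {p q : ℕ} (P : Matrix (Fin p) (Fin q) F[X]) (i : Fin p) (a : Fin q) :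
    (P i a).natDegree ≤ rowDeg P i :=
  Finset.le_sup (f := fun a => (P i a).natDegree) (Finset.mem_univ a)

section PredictableDegree

variable {r q : ℕ} {P : Matrix (Fin r) (Fin q) F[X]} {e : Fin r → ℕ}

lemma vecMul_mem_degreeLT (hPe : ∀ i a, (P i a).natDegree ≤ e i) {k : ℕ} {y : Fin r → F[X]}
    (hy : ∀ i, y i ∈ F[X]_(k - e i)) (a : Fin q) : (y ᵥ* P) a ∈ F[X]_k := by
  rw [vecMul, dotProduct]
  exact Submodule.sum_mem _ fun i _ => mul_comm (P i a) (y i) ▸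
    mul_mem_degreeLT_of_mem_degreeLT_sub (hPe i a) (hy i)

lemma coeff_vecMul_eq_vecMul_coeff (hPe : ∀ i a, (P i a).natDegree ≤ e i) {y : Fin r → F[X]}
    {D : ℕ} (hD : ∀ i, y i ≠ 0 → (y i).natDegree + e i ≤ D) (a : Fin q) :
    ((y ᵥ* P) a).coeff D =
      ((fun i => (y i).coeff (D - e i)) ᵥ* Matrix.of fun i a => (P i a).coeff (e i)) a := by
  simp only [vecMul, dotProduct, finsetSum_coeff, of_apply]
  refine Finset.sum_congr rfl fun i _ => ?_
  rcases eq_or_ne (y i) 0 with hyi | hyi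
  · simp [hyi]
  have hle := hD i hyi
  have := coeff_mul_add_eq_of_natDegree_le (f := y i) (df := D - e i) (by omega) (hPe i a)
  rwa [Nat.sub_add_cancel (by omega)] at this

theorem mem_degreeLT_sub_of_vecMul_mem_degreeLT (hPe : ∀ i a, (P i a).natDegree ≤ e i)
    (hlead : ∀ x : Fin r → F, (x ᵥ* Matrix.of fun i a => (P i a).coeff (e i)) = 0 → x = 0)
    {k : ℕ} {y : Fin r → F[X]} (hy : ∀ a, (y ᵥ* P) a ∈ F[X]_k) (i : Fin r) :
    y i ∈ F[X]_(k - e i) := by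
  classical
  by_contra hi
  have hyi : y i ≠ 0 := fun h => hi (h ▸ zero_mem _)
  obtain ⟨i₀, hi₀, hmax⟩ := (Finset.univ.filter fun i => y i ≠ 0).exists_max_image
    (fun i => (y i).natDegree + e i) ⟨i, by simpa using hyi⟩
  simp only [Finset.mem_filter, Finset.mem_univ, true_and] at hi₀ hmax
  set D := (y i₀).natDegree + e i₀
  have hkD : k ≤ D := by
    rw [mem_degreeLT, ← natDegree_lt_iff_degree_lt hyi, not_lt] at hi
    have := hmax i hyi
    omega
  have hx := hlead _ (funext fun a => by
    rw [← coeff_vecMul_eq_vecMul_coeff hPe hmax,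
      coeff_eq_zero_of_degree_lt ((mem_degreeLT.1 (hy a)).trans_le (by exact_mod_cast hkD))]
    rfl)
  have := congrFun hx i₀
  simp only [D, Nat.add_sub_cancel, coeff_natDegree, Pi.zero_apply, leadingCoeff_eq_zero] at this
  exact hi₀ this

end PredictableDegree

section Sylvester

variable {p q : ℕ}

def kerDegreeLT (k : ℕ) (P : Matrix (Fin p) (Fin q) F[X]) : Submodule F (Fin q → F[X]) :=
  Submodule.pi Set.univ (fun _ => F[X]_k) ⊓ (LinearMap.ker P.mulVecLin).restrictScalars F

lemma mem_kerDegreeLT {k : ℕ} {P : Matrix (Fin p) (Fin q) F[X]} {v : Fin q → F[X]} :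
    v ∈ kerDegreeLT k P ↔ (∀ a, v a ∈ F[X]_k) ∧ P *ᵥ v = 0 := by
  simp [kerDegreeLT]

/-- Index `(j, a)` holds the coefficient of `λ ^ j` in entry `a`, matching the columns of `sylv`. -/
def ofCoeffs (k q : ℕ) : (Fin k × Fin q → F) →ₗ[F] Fin q → F[X] :=
  LinearMap.pi fun a => (F[X]_k).subtype ∘ₗ (degreeLTEquiv F k).symm.toLinearMap ∘ₗ
    LinearMap.funLeft F F (fun j => (j, a))

lemma ofCoeffs_mem_degreeLT {k : ℕ} (x : Fin k × Fin q → F) (a : Fin q) :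
    ofCoeffs k q x a ∈ F[X]_k :=
  Subtype.prop _

lemma coeff_ofCoeffs {k : ℕ} (x : Fin k × Fin q → F) (j : Fin k) (a : Fin q) :
    (ofCoeffs k q x a).coeff j = x (j, a) :=
  congrFun ((degreeLTEquiv F k).apply_symm_apply _) j

lemma ofCoeffs_injective (k q : ℕ) : Function.Injective (ofCoeffs (F := F) k q) := by
  intro x y h
  ext ⟨j, a⟩
  simpa only [coeff_ofCoeffs] using congrArg (fun v => (v a).coeff j) h

lemma range_ofCoeffs (k q : ℕ) :
    LinearMap.range (ofCoeffs (F := F) k q) = Submodule.pi Set.univ (fun _ => F[X]_k) := by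
  refine le_antisymm (LinearMap.range_le_iff_comap.mpr ?_) fun v hv => ?_
  · ext x
    simp [ofCoeffs_mem_degreeLT]
  · refine ⟨fun ja => (v ja.2).coeff ja.1, funext fun a => ?_⟩
    exact congrArg Subtype.val ((degreeLTEquiv F k).symm_apply_apply ⟨v a, hv a (Set.mem_univ a)⟩)

lemma sylv_mulVec {e k : ℕ} {P : Matrix (Fin p) (Fin q) F[X]} (hP : ∀ i a, (P i a).natDegree ≤ e)
    (x : Fin k × Fin q → F) (i : Fin (k + e)) (b : Fin p) :
    (sylv e k P *ᵥ x) (i, b) = ((P *ᵥ ofCoeffs k q x) b).coeff i := by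
  simp only [mulVec, dotProduct, Fintype.sum_prod_type, finsetSum_coeff]
  rw [Finset.sum_comm]
  refine Finset.sum_congr rfl fun a _ => ?_
  have : ofCoeffs k q x a = ∑ j : Fin k, monomial j (x (j, a)) := rfl
  rw [this, Finset.mul_sum, finsetSum_coeff]
  refine Finset.sum_congr rfl fun j _ => ?_
  rw [← C_mul_X_pow_eq_monomial, mul_left_comm, coeff_C_mul, coeff_mul_X_pow', sylv]
  by_cases hji : (j : ℕ) ≤ i
  · by_cases hie : (i : ℕ) ≤ j + e
    · simp [hji, hie, mul_comm]
    · simp [hji, hie, coeff_eq_zero_of_natDegree_lt ((hP b a).trans_lt (by omega : e < i - j))]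
  · simp [hji]

theorem rank_sylv_add_finrank_kerDegreeLT {e : ℕ} (k : ℕ) {P : Matrix (Fin p) (Fin q) F[X]}
    (hP : ∀ i a, (P i a).natDegree ≤ e) :
    (sylv e k P).rank + Module.finrank F (kerDegreeLT k P) = k * q := by
  have hmap : (LinearMap.ker (sylv e k P).mulVecLin).map (ofCoeffs k q) = kerDegreeLT k P := by
    ext v
    simp only [Submodule.mem_map, LinearMap.mem_ker, mulVecLin_apply, mem_kerDegreeLT]
    constructor
    · rintro ⟨x, hx, rfl⟩
      refine ⟨ofCoeffs_mem_degreeLT x, funext fun b => Polynomial.ext fun i => ?_⟩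
      by_cases hi : i < k + e
      · simpa [sylv_mulVec hP] using congrFun hx (⟨i, hi⟩, b)
      · have hdeg : (ofCoeffs k q x ᵥ* Pᵀ) b ∈ F[X]_(k + e) :=
          vecMul_mem_degreeLT (e := fun _ => e) (fun a b => hP b a)
            (fun a => by rw [Nat.add_sub_cancel]; exact ofCoeffs_mem_degreeLT x a) b
        rw [vecMul_transpose] at hdeg
        exact coeff_eq_zero_of_degree_lt
          ((mem_degreeLT.1 hdeg).trans_le (by exact_mod_cast not_lt.1 hi))
    · rintro ⟨hv, hPv⟩
      obtain ⟨x, rfl⟩ : v ∈ LinearMap.range (ofCoeffs k q) := by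
        rw [range_ofCoeffs]; simpa using hv
      exact ⟨x, funext fun ⟨i, b⟩ => by simp [sylv_mulVec hP, hPv], rfl⟩
  rw [← hmap, ← LinearEquiv.finrank_eq
      (Submodule.equivMapOfInjective _ (ofCoeffs_injective k q) _),
    Matrix.rank, LinearMap.finrank_range_add_finrank_ker]
  simp

lemma sum_pow_mul_coeff_sub_eq_pow_mul_aeval {L : Type*} [CommRing L] [Algebra F L] {e k : ℕ}
    {p : F[X]} (hp : p.natDegree ≤ e) (μ : L) (j : Fin k) :
    ∑ i : Fin (k + e), μ ^ (i : ℕ) *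
      algebraMap F L (if (j : ℕ) ≤ i ∧ (i : ℕ) ≤ j + e then p.coeff (i - j) else 0) =
      μ ^ (j : ℕ) * aeval μ p := by
  rw [Fin.sum_univ_eq_sum_range (fun i => μ ^ i *
      algebraMap F L (if (j : ℕ) ≤ i ∧ i ≤ j + e then p.coeff (i - j) else 0)),
    ← Finset.sum_subset (s₁ := (Finset.range (e + 1)).map (addLeftEmbedding (j : ℕ)))]
  · simp only [Finset.sum_map, addLeftEmbedding_apply, pow_add, le_add_iff_nonneg_right, zero_le,
      add_le_add_iff_left, true_and, add_tsub_cancel_left, aeval_eq_sum_range' (Nat.lt_succ_of_le hp),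
      Algebra.smul_def, Finset.mul_sum]
    refine Finset.sum_congr rfl fun s hs => ?_
    rw [if_pos (Nat.lt_succ_iff.1 (Finset.mem_range.1 hs))]
    ring
  · intro i hi
    simp only [Finset.mem_map, Finset.mem_range, addLeftEmbedding_apply] at hi
    obtain ⟨s, hs, rfl⟩ := hi
    simp only [Finset.mem_range]
    omega
  · intro i _ hi
    simp only [Finset.mem_map, Finset.mem_range, addLeftEmbedding_apply, not_exists,
      not_and] at hi
    rw [if_neg, map_zero, mul_zero]
    rintro ⟨h1, h2⟩
    exact hi (i - j) (by omega) (by omega)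

lemma vecMul_sylv_map_pow_mul {L : Type*} [CommRing L] [Algebra F L] {e k : ℕ}
    {P : Matrix (Fin p) (Fin q) F[X]} (hP : ∀ i a, (P i a).natDegree ≤ e) (μ : L) (y : Fin p → L)
    (j : Fin k) (a : Fin q) :
    ((fun ib : Fin (k + e) × Fin p => μ ^ (ib.1 : ℕ) * y ib.2) ᵥ*
      (sylv e k P).map (algebraMap F L)) (j, a) = μ ^ (j : ℕ) * (y ᵥ* P.map (aeval μ)) a := by
  simp only [vecMul, dotProduct, Fintype.sum_prod_type, map_apply, Finset.mul_sum]
  rw [Finset.sum_comm]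
  refine Finset.sum_congr rfl fun b _ => ?_
  rw [mul_left_comm, ← sum_pow_mul_coeff_sub_eq_pow_mul_aeval (hP b a) μ j, Finset.mul_sum]
  refine Finset.sum_congr rfl fun i _ => ?_
  rw [sylv]
  ring

end Sylvester

lemma vecMul_map_injective_of_rank_eq_card {ι κ : Type*} [Fintype ι] [Fintype κ]
    {A : Matrix ι κ F} (hA : A.rank = Fintype.card ι) (L : Type*) [CommRing L] [Algebra F L] :
    Function.Injective (A.map (algebraMap F L)).vecMul := by
  classical
  have hsurj : LinearMap.range A.mulVecLin = ⊤ :=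
    Submodule.eq_top_of_finrank_eq (by rw [← Matrix.rank, hA, Module.finrank_fintype_fun_eq_card])
  obtain ⟨g, hg⟩ := A.mulVecLin.exists_rightInverse_of_surjective hsurj
  have hAB : A * LinearMap.toMatrix' g = 1 := by
    apply Matrix.toLin'.injective
    rw [Matrix.toLin'_mul, Matrix.toLin'_toMatrix', Matrix.toLin'_one, ← hg]
    rfl
  have hAB' : A.map (algebraMap F L) * (LinearMap.toMatrix' g).map (algebraMap F L) = 1 := by
    rw [← Matrix.map_mul, hAB, Matrix.map_one _ (map_zero _) (map_one _)]
  intro y z h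
  simpa [vecMul_vecMul, hAB'] using congrArg (· ᵥ* (LinearMap.toMatrix' g).map (algebraMap F L)) h

section LeftPrime

variable {r s q : ℕ}

/-- The rows of `P` stay linearly independent modulo every polynomial `g`. For `g = 0` this is
independence over `F[λ]`; for irreducible `g` it says that `P(λ₀)` has full row rank at the roots
`λ₀` of `g`. -/
def IsLeftPrime (P : Matrix (Fin r) (Fin q) F[X]) : Prop :=
  ∀ (g : F[X]) (y : Fin r → F[X]), (∀ a, g ∣ (y ᵥ* P) a) → ∀ i, g ∣ y i

lemma IsLeftPrime.vecMul_injective {P : Matrix (Fin r) (Fin q) F[X]} (hP : IsLeftPrime P) :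
    Function.Injective P.vecMul := fun y z h => funext fun i =>
  sub_eq_zero.1 (zero_dvd_iff.1 (hP 0 (y - z) (fun a => by simp [sub_vecMul, h]) i))

lemma IsLeftPrime.exists_eq_vecMul {P : Matrix (Fin r) (Fin q) F[X]} (hP : IsLeftPrime P)
    {g : F[X]} (hg : g ≠ 0) {v : Fin q → F[X]} {y : Fin r → F[X]} (h : g • v = y ᵥ* P) :
    ∃ z, v = z ᵥ* P := by
  choose z hz using hP g y fun a => ⟨v a, (congrFun h a).symm⟩
  refine ⟨z, funext fun a => mul_left_cancel₀ hg ?_⟩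
  have hy : y = g • z := funext hz
  simpa [hy, smul_vecMul] using congrFun h a

lemma linearIndependent_ratRow_iff {P : Matrix (Fin r) (Fin q) F[X]} :
    LinearIndependent (RatFunc F) (ratRow P) ↔ Function.Injective P.vecMul := by
  let f := LinearMap.compLeft (Algebra.linearMap F[X] (RatFunc F)) (Fin q)
  have hf : LinearMap.ker f = ⊥ := LinearMap.ker_eq_bot.2 fun v w h =>
    funext fun a => IsFractionRing.injective F[X] (RatFunc F) (congrFun h a)
  rw [← LinearIndependent.iff_fractionRing F[X] (RatFunc F), Matrix.vecMul_injective_iff,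
    ← f.linearIndependent_iff hf]
  rfl

lemma exists_smul_eq_vecMul_of_mem_rowSpan {P : Matrix (Fin r) (Fin q) F[X]} {v : Fin q → F[X]}
    (hv : (fun a => algebraMap F[X] (RatFunc F) (v a)) ∈ rowSpan P) :
    ∃ g : F[X], g ≠ 0 ∧ ∃ y, g • v = y ᵥ* P := by
  obtain ⟨c, hc⟩ := (Submodule.mem_span_range_iff_exists_fun (RatFunc F)).1 hv
  obtain ⟨g, hg⟩ := IsLocalization.exist_integer_multiples (nonZeroDivisors F[X]) Finset.univ c
  choose y hy using fun i => hg i (Finset.mem_univ i)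
  refine ⟨g, nonZeroDivisors.ne_zero g.2, y,
    funext fun a => IsFractionRing.injective F[X] (RatFunc F) ?_⟩
  have := congrFun hc a
  simp only [Finset.sum_apply, Pi.smul_apply, smul_eq_mul, ratRow] at this
  simp only [Pi.smul_apply, smul_eq_mul, vecMul, dotProduct, map_mul, map_sum, hy, ← this,
    Algebra.smul_def, Finset.mul_sum, mul_assoc]

theorem rightNullSpace_eq_rowSpan {P : Matrix (Fin r) (Fin q) F[X]}
    {Q : Matrix (Fin s) (Fin q) F[X]} (hP : LinearIndependent (RatFunc F) (ratRow P))
    (hQ : LinearIndependent (RatFunc F) (ratRow Q)) (hq : r + s = q) (hQP : Q * Pᵀ = 0) :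
    rightNullSpace Q = rowSpan P := by
  have hle : rowSpan P ≤ rightNullSpace Q := by
    refine Submodule.span_le.2 (Set.range_subset_iff.2 fun i => funext fun b => ?_)
    have h := congrFun (congrFun hQP b) i
    simp only [mul_apply, transpose_apply, Matrix.zero_apply] at h
    simp [ratMat, ratRow, mulVec, dotProduct, ← map_mul, ← map_sum, h]
  refine (Submodule.eq_of_le_of_finrank_eq hle ?_).symm
  have hrank := LinearMap.finrank_range_add_finrank_ker (ratMat Q).mulVecLin
  rw [← Matrix.rank, LinearIndependent.rank_matrix (M := ratMat Q) hQ,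
    Module.finrank_fintype_fun_eq_card] at hrank
  rw [rowSpan, finrank_span_eq_card hP, rightNullSpace]
  simp only [Fintype.card_fin] at hrank ⊢
  omega

theorem IsLeftPrime.ker_mulVecLin_eq_range {P : Matrix (Fin r) (Fin q) F[X]}
    {Q : Matrix (Fin s) (Fin q) F[X]} (hP : IsLeftPrime P)
    (hQ : LinearIndependent (RatFunc F) (ratRow Q)) (hq : r + s = q) (hQP : Q * Pᵀ = 0) :
    LinearMap.ker Q.mulVecLin = LinearMap.range P.vecMulLinear := by
  ext v
  simp only [LinearMap.mem_ker, mulVecLin_apply, LinearMap.mem_range, vecMulLinear_apply]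
  constructor
  · intro hv
    have hnull : (fun a => algebraMap F[X] (RatFunc F) (v a)) ∈ rightNullSpace Q := by
      funext b
      simpa [ratMat, RingHom.map_mulVec, Function.comp_def] using
        congrArg (algebraMap F[X] (RatFunc F)) (congrFun hv b)
    rw [rightNullSpace_eq_rowSpan (linearIndependent_ratRow_iff.2 hP.vecMul_injective) hQ hq
      hQP] at hnull
    obtain ⟨g, hg, y, h⟩ := exists_smul_eq_vecMul_of_mem_rowSpan hnull
    obtain ⟨z, rfl⟩ := hP.exists_eq_vecMul hg h
    exact ⟨z, rfl⟩
  · rintro ⟨y, rfl⟩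
    rw [← mulVec_transpose, mulVec_mulVec, hQP, zero_mulVec]

theorem finrank_kerDegreeLT_eq_sum {P : Matrix (Fin r) (Fin q) F[X]}
    {Q : Matrix (Fin s) (Fin q) F[X]} {e : Fin r → ℕ} (hPe : ∀ i a, (P i a).natDegree ≤ e i)
    (hlead : ∀ x : Fin r → F, (x ᵥ* Matrix.of fun i a => (P i a).coeff (e i)) = 0 → x = 0)
    (hP : Function.Injective P.vecMul)
    (hker : LinearMap.ker Q.mulVecLin = LinearMap.range P.vecMulLinear) (k : ℕ) :
    Module.finrank F (kerDegreeLT k Q) = ∑ i, (k - e i) := by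
  let φ : ((i : Fin r) → F[X]_(k - e i)) →ₗ[F] Fin q → F[X] :=
    P.vecMulLinear.restrictScalars F ∘ₗ
      LinearMap.pi fun i => (F[X]_(k - e i)).subtype ∘ₗ LinearMap.proj i
  have hφ : Function.Injective φ := fun y z h =>
    funext fun i => Subtype.ext (congrFun (hP h) i)
  have hrange : LinearMap.range φ = kerDegreeLT k Q := by
    ext v
    simp only [LinearMap.mem_range, mem_kerDegreeLT]
    constructor
    · rintro ⟨y, rfl⟩
      have hy : φ y ∈ LinearMap.ker Q.mulVecLin := hker ▸ ⟨fun i => y i, rfl⟩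
      exact ⟨vecMul_mem_degreeLT hPe fun i => (y i).2, hy⟩
    · rintro ⟨hv, hQv⟩
      obtain ⟨y, rfl⟩ : v ∈ LinearMap.range P.vecMulLinear := hker ▸ hQv
      exact ⟨fun i => ⟨y i, mem_degreeLT_sub_of_vecMul_mem_degreeLT hPe hlead hv i⟩, rfl⟩
  rw [← hrange, LinearMap.finrank_range_of_inj hφ, Module.finrank_pi_fintype]
  simp [Module.finrank_eq_card_basis (degreeLT.basis F _)]

end LeftPrime

section FullSylvesterRank

variable {m n d : ℕ} {M : Matrix (Fin m) (Fin (m + n)) F[X]}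

lemma HasFullSylvesterRank.rank_sylv_eq_card (hn : 0 < n) (hfull : HasFullSylvesterRank d M)
    {k : ℕ} (hk : d * m < k) : (sylv d k M).rank = Fintype.card (Fin (k + d) × Fin m) := by
  rw [hfull k (by omega), min_eq_left (by nlinarith), Fintype.card_prod, Fintype.card_fin,
    Fintype.card_fin]

theorem HasFullSylvesterRank.isLeftPrime (hn : 0 < n) (hdeg : ∀ i a, (M i a).natDegree ≤ d)
    (hfull : HasFullSylvesterRank d M) : IsLeftPrime M := by
  intro g y hy b
  let π := Ideal.Quotient.mkₐ F (Ideal.span {g})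
  -- `(λ ^ i * y b mod g)_(i, b)` is a left null vector of `S_k(M)` over `F[λ]/(g)`.
  have hY : (fun ib : Fin (d * m + 1 + d) × Fin m => π X ^ (ib.1 : ℕ) * π (y ib.2)) ᵥ*
      (sylv d (d * m + 1) M).map (algebraMap F _) = 0 := by
    funext ⟨j, a⟩
    have hya : π ((y ᵥ* M) a) = 0 :=
      Ideal.Quotient.eq_zero_iff_mem.2 (Ideal.mem_span_singleton.2 (hy a))
    have hmap : M.map (aeval (π X)) = M.map (π : F[X] →+* F[X] ⧸ Ideal.span {g}) := by
      ext
      rw [map_apply, aeval_algHom_apply, aeval_X_left_apply]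
      rfl
    rw [vecMul_sylv_map_pow_mul hdeg (π X) (fun b => π (y b)), Pi.zero_apply, hmap,
      show (fun b => π (y b)) = (π : F[X] →+* F[X] ⧸ Ideal.span {g}) ∘ y from rfl,
      ← RingHom.map_vecMul]
    exact mul_eq_zero_of_right _ hya
  have := congrFun (vecMul_map_injective_of_rank_eq_card
    (hfull.rank_sylv_eq_card hn (Nat.lt_succ_self _)) _ (hY.trans (zero_vecMul _).symm))
    (⟨0, by omega⟩, b)
  simpa [π, Ideal.Quotient.eq_zero_iff_mem, Ideal.mem_span_singleton] using this

theorem HasFullSylvesterRank.eq_zero_of_vecMul_coeffMat_eq_zero (hn : 0 < n)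
    (hfull : HasFullSylvesterRank d M) {x : Fin m → F} (hx : x ᵥ* coeffMat d M = 0) : x = 0 := by
  have hinj : Function.Injective (sylv d (d * m + 1) M).vecMul := by
    simpa using vecMul_map_injective_of_rank_eq_card
      (hfull.rank_sylv_eq_card hn (Nat.lt_succ_self _)) F
  let last : Fin (d * m + 1 + d) := ⟨d * m + d, by omega⟩
  -- `x` placed in the last block row is a left null vector of `S_k(M)`.
  have hY : (fun ib => if ib.1 = last then x ib.2 else 0) ᵥ* sylv d (d * m + 1) M = 0 := by
    funext ⟨j, a⟩
    simp only [vecMul, dotProduct, Fintype.sum_prod_type, ite_mul, zero_mul]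
    rw [Fintype.sum_eq_single last fun i hi => by simp [hi]]
    simp only [sylv, last]
    by_cases hj : (j : ℕ) = d * m
    · simpa [hj, vecMul, dotProduct, coeffMat] using congrFun hx a
    · simp [show ¬ d * m + d ≤ j + d by omega]
  funext b
  simpa [last] using congrFun (hinj (hY.trans (zero_vecMul _).symm)) (last, b)

end FullSylvesterRank

section ReplaceRow

variable {K : Type*} [Field K] {n q : ℕ}

lemma updateRow_vecMul_eq_mul (A : Matrix (Fin n) (Fin q) K) (i₀ : Fin n) (f : Fin n → K) :
    A.updateRow i₀ (f ᵥ* A) = (1 : Matrix (Fin n) (Fin n) K).updateRow i₀ f * A := by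
  rw [updateRow_mul, Matrix.one_mul]

lemma isUnit_one_updateRow {i₀ : Fin n} {f : Fin n → K} (hf : f i₀ ≠ 0) :
    IsUnit ((1 : Matrix (Fin n) (Fin n) K).updateRow i₀ f) := by
  have h := det_updateRow_sum (1 : Matrix (Fin n) (Fin n) K) i₀ f
  rw [← vecMul_eq_sum, vecMul_one, det_one, smul_eq_mul, mul_one] at h
  exact (isUnit_iff_isUnit_det _).2 (h ▸ hf.isUnit)

lemma linearIndependent_rows_updateRow_vecMul {A : Matrix (Fin n) (Fin q) K}
    (hA : LinearIndependent K A.row) {i₀ : Fin n} {f : Fin n → K} (hf : f i₀ ≠ 0) :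
    LinearIndependent K (A.updateRow i₀ (f ᵥ* A)).row := by
  rw [← vecMul_injective_iff] at hA ⊢
  rw [updateRow_vecMul_eq_mul]
  intro y z h
  simp only [← vecMul_vecMul] at h
  exact vecMul_injective_of_isUnit (isUnit_one_updateRow hf) (hA h)

lemma span_rows_updateRow_vecMul (A : Matrix (Fin n) (Fin q) K) {i₀ : Fin n} {f : Fin n → K}
    (hf : f i₀ ≠ 0) :
    Submodule.span K (Set.range (A.updateRow i₀ (f ᵥ* A)).row) =
      Submodule.span K (Set.range A.row) := by
  have hsurj := vecMul_surjective_iff_isUnit.2 (isUnit_one_updateRow hf)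
  rw [← range_vecMulLinear, ← range_vecMulLinear, updateRow_vecMul_eq_mul]
  ext v
  simp only [LinearMap.mem_range, vecMulLinear_apply, ← vecMul_vecMul]
  exact ⟨fun ⟨y, hy⟩ => ⟨_, hy⟩, fun ⟨z, hz⟩ =>
    let ⟨y, hy⟩ := hsurj z; ⟨y, by simpa [hy] using hz⟩⟩

end ReplaceRow

section MinimalBasis

variable {n q : ℕ} {N : Matrix (Fin n) (Fin q) F[X]}

/-- Otherwise replacing row `i₀` of `N` by `v` would give a basis of the same space with a smaller
sum of row degrees. -/
theorem IsMinimalBasis.exists_rowDeg_le_degree (hN : IsMinimalBasis N) {g : F[X]} (hg : g ≠ 0)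
    {c : Fin n → F[X]} {i₀ : Fin n} (hc : c i₀ ≠ 0) {v : Fin q → F[X]} (hv : g • v = c ᵥ* N) :
    ∃ a, (rowDeg N i₀ : WithBot ℕ) ≤ (v a).degree := by
  classical
  by_contra! hdeg
  obtain ⟨hli, -, hmin⟩ := hN
  let ι := algebraMap F[X] (RatFunc F)
  have hι : ∀ {p : F[X]}, p ≠ 0 → ι p ≠ 0 :=
    fun hp => (map_ne_zero_iff _ (IsFractionRing.injective F[X] (RatFunc F))).2 hp
  let f : Fin n → RatFunc F := fun i => ι (c i) / ι g
  have hf : f i₀ ≠ 0 := div_ne_zero (hι hc) (hι hg)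
  have hfv : f ᵥ* ratMat N = fun a => ι (v a) := by
    funext a
    have := congrArg ι (congrFun hv a)
    simp only [Pi.smul_apply, smul_eq_mul, map_mul, vecMul, dotProduct, map_sum] at this
    simp only [vecMul, dotProduct, ratMat, map_apply, f, div_mul_eq_mul_div, ← Finset.sum_div]
    field_simp [hι hg]
    exact this.symm
  have hrow : ratMat (N.updateRow i₀ v) = (ratMat N).updateRow i₀ (f ᵥ* ratMat N) := by
    rw [hfv]
    ext i a
    rcases eq_or_ne i i₀ with rfl | hi <;> simp [ratMat, ι, updateRow_apply, *]
  have hli' : LinearIndependent (RatFunc F) (ratRow (N.updateRow i₀ v)) := by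
    have := linearIndependent_rows_updateRow_vecMul (A := ratMat N) hli hf
    rwa [← hrow] at this
  have hspan : rowSpan (N.updateRow i₀ v) = rowSpan N := by
    have := span_rows_updateRow_vecMul (ratMat N) hf
    rwa [← hrow] at this
  have hv0 : v ≠ 0 := by
    rintro rfl
    exact hli'.ne_zero i₀ (funext fun a => by simp [ratRow])
  obtain ⟨a₁, ha₁⟩ := Function.ne_iff.1 hv0
  have hpos : 0 < rowDeg N i₀ := by
    have := (zero_le_degree_iff.2 ha₁).trans_lt (hdeg a₁)
    exact_mod_cast this
  have hlt : rowDeg (N.updateRow i₀ v) i₀ < rowDeg N i₀ := by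
    refine (Finset.sup_lt_iff hpos).2 fun a _ => ?_
    rw [updateRow_self]
    rcases eq_or_ne (v a) 0 with h | h
    · simpa [h] using hpos
    · exact (natDegree_lt_iff_degree_lt h).2 (hdeg a)
  have hle : ∀ i ∈ Finset.univ, rowDeg (N.updateRow i₀ v) i ≤ rowDeg N i := fun i _ => by
    rcases eq_or_ne i i₀ with rfl | hi
    · exact hlt.le
    · simp [rowDeg, updateRow_ne hi]
  exact (Finset.sum_lt_sum hle ⟨i₀, Finset.mem_univ _, hlt⟩).not_ge (hmin _ hli' hspan)

lemma IsMinimalBasis.dvd_of_monic_dvd_vecMul (hN : IsMinimalBasis N) {π : F[X]} (hπ : π.Monic)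
    {y : Fin n → F[X]} (hy : ∀ a, π ∣ (y ᵥ* N) a) (i : Fin n) : π ∣ y i := by
  classical
  let x : Fin n → F[X] := fun i => y i %ₘ π
  by_contra hi
  have hxi : x i ≠ 0 := fun h => hi ((modByMonic_eq_zero_iff_dvd hπ).1 h)
  obtain ⟨i₀, hi₀, hmax⟩ := (Finset.univ.filter fun i => x i ≠ 0).exists_max_image (rowDeg N)
    ⟨i, by simpa using hxi⟩
  simp only [Finset.mem_filter, Finset.mem_univ, true_and] at hi₀ hmax
  have hx : x = y - π • fun i => y i /ₘ π :=
    funext fun i => eq_sub_of_add_eq (modByMonic_add_div (y i) π)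
  have hdvd : ∀ a, π ∣ (x ᵥ* N) a := fun a => by
    rw [hx, sub_vecMul, smul_vecMul]
    exact dvd_sub (hy a) (dvd_mul_right _ _)
  choose w hw using hdvd
  obtain ⟨a, ha⟩ := hN.exists_rowDeg_le_degree hπ.ne_zero hi₀ (funext hw).symm
  have hdeg : (x ᵥ* N) a ∈ F[X]_(π.natDegree + rowDeg N i₀) := by
    refine vecMul_mem_degreeLT (natDegree_le_rowDeg N) (fun j => ?_) a
    rcases eq_or_ne (x j) 0 with h | h
    · rw [h]
      exact zero_mem _
    · have := hmax j h
      refine mem_degreeLT.2 ((degree_modByMonic_lt _ hπ).trans_le ?_)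
      rw [degree_eq_natDegree hπ.ne_zero]
      exact_mod_cast (by omega : π.natDegree ≤ π.natDegree + rowDeg N i₀ - rowDeg N j)
  have hw0 : w a ≠ 0 := by
    rintro h
    simp [h] at ha
  rw [hw a, mem_degreeLT, degree_mul, degree_eq_natDegree hπ.ne_zero,
    degree_eq_natDegree hw0] at hdeg
  rw [degree_eq_natDegree hw0] at ha
  norm_cast at hdeg ha
  omega

theorem IsMinimalBasis.isLeftPrime (hN : IsMinimalBasis N) : IsLeftPrime N := by
  classical
  intro g y hy i
  rcases eq_or_ne g 0 with rfl | hg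
  · have : y = 0 := linearIndependent_ratRow_iff.1 hN.1
      (funext fun a => (zero_dvd_iff.1 (hy a)).trans (congrFun (zero_vecMul N) a).symm)
    simp [this]
  · rw [← normalize_dvd_iff]
    exact hN.dvd_of_monic_dvd_vecMul (monic_normalize hg) (fun a => normalize_dvd_iff.2 (hy a)) i

theorem IsMinimalBasis.eq_zero_of_vecMul_highRowMat_eq_zero (hN : IsMinimalBasis N)
    {x : Fin n → F} (hx : x ᵥ* highRowMat N = 0) : x = 0 := by
  classical
  by_contra hx0
  obtain ⟨i, hi⟩ := Function.ne_iff.1 hx0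
  obtain ⟨i₀, hi₀, hmax⟩ := (Finset.univ.filter fun i => x i ≠ 0).exists_max_image (rowDeg N)
    ⟨i, by simpa using hi⟩
  simp only [Finset.mem_filter, Finset.mem_univ, true_and] at hi₀ hmax
  set e₀ := rowDeg N i₀
  -- The combination `∑ xᵢ λ^(e₀ - deg Nᵢ) Nᵢ` loses its degree-`e₀` coefficient.
  let c : Fin n → F[X] := fun i => C (x i) * X ^ (e₀ - rowDeg N i)
  have hc : c i₀ ≠ 0 := by simp [c, hi₀]
  have hcdeg : ∀ i, c i ≠ 0 → (c i).natDegree + rowDeg N i ≤ e₀ := fun i hci => by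
    have hxi : x i ≠ 0 := fun h => hci (by simp [c, h])
    rw [natDegree_C_mul_X_pow _ _ hxi]
    have := hmax i hxi
    omega
  obtain ⟨a, ha⟩ := hN.exists_rowDeg_le_degree one_ne_zero hc (one_smul _ _)
  refine (not_lt.2 ha) ((degree_lt_iff_coeff_zero _ _).2 fun u hu => ?_)
  rcases (show e₀ ≤ u from hu).eq_or_lt with rfl | hu
  · have hcoeff : (fun j => (c j).coeff (e₀ - rowDeg N j)) = x :=
      funext fun j => by simp [c]
    rw [coeff_vecMul_eq_vecMul_coeff (natDegree_le_rowDeg N) hcdeg, hcoeff]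
    exact congrFun hx a
  · have hmem : (c ᵥ* N) a ∈ F[X]_(e₀ + 1) := by
      refine vecMul_mem_degreeLT (natDegree_le_rowDeg N) (fun j => ?_) a
      rcases eq_or_ne (x j) 0 with h | h
      · simp [c, h]
      · have := hmax j h
        refine mem_degreeLT.2 ((degree_C_mul_X_pow_le _ _).trans_lt ?_)
        exact_mod_cast (by omega : e₀ - rowDeg N j < e₀ + 1 - rowDeg N j)
    exact coeff_eq_zero_of_degree_lt ((mem_degreeLT.1 hmem).trans_le (by exact_mod_cast hu))

end MinimalBasis

section Dual

variable {m n d : ℕ} {M : Matrix (Fin m) (Fin (m + n)) F[X]}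
  {N : Matrix (Fin n) (Fin (m + n)) F[X]}

theorem finrank_kerDegreeLT_eq_mul_of_dual (hn : 0 < n) (hdeg : ∀ i a, (M i a).natDegree ≤ d)
    (hfull : HasFullSylvesterRank d M) (hN : LinearIndependent (RatFunc F) (ratRow N))
    (hdual : M * Nᵀ = 0) (k : ℕ) : Module.finrank F (kerDegreeLT k N) = m * (k - d) := by
  have hM := hfull.isLeftPrime hn hdeg
  have hNM : N * Mᵀ = 0 := by
    rw [← transpose_transpose N, ← transpose_mul, hdual, transpose_zero]
  rw [finrank_kerDegreeLT_eq_sum (e := fun _ => d) hdeg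
    (fun _ hx => hfull.eq_zero_of_vecMul_coeffMat_eq_zero hn hx) hM.vecMul_injective
    (hM.ker_mulVecLin_eq_range hN rfl hNM) k]
  simp

theorem finrank_kerDegreeLT_eq_sum_of_isMinimalBasis (hN : IsMinimalBasis N)
    (hM : LinearIndependent (RatFunc F) (ratRow M)) (hdual : M * Nᵀ = 0) (k : ℕ) :
    Module.finrank F (kerDegreeLT k M) = ∑ i, (k - rowDeg N i) :=
  finrank_kerDegreeLT_eq_sum (natDegree_le_rowDeg N)
    (fun _ hx => hN.eq_zero_of_vecMul_highRowMat_eq_zero hx) hN.isLeftPrime.vecMul_injective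
    (hN.isLeftPrime.ker_mulVecLin_eq_range hM (Nat.add_comm n m) hdual) k

theorem sum_rowDeg_eq_of_dual (hn : 0 < n) (hdeg : ∀ i a, (M i a).natDegree ≤ d)
    (hfull : HasFullSylvesterRank d M) (hN : IsMinimalBasis N) (hdual : M * Nᵀ = 0) :
    ∑ i, rowDeg N i = m * d := by
  set k := d * m + 1 + ∑ i, rowDeg N i
  have hM := linearIndependent_ratRow_iff.2 (hfull.isLeftPrime hn hdeg).vecMul_injective
  have hrank := rank_sylv_add_finrank_kerDegreeLT k hdeg
  rw [hfull.rank_sylv_eq_card hn (by omega),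
    finrank_kerDegreeLT_eq_sum_of_isMinimalBasis hN hM hdual, Fintype.card_prod,
    Fintype.card_fin, Fintype.card_fin] at hrank
  have hsplit : ∑ i, (k - rowDeg N i) + ∑ i, rowDeg N i = n * k := by
    rw [← Finset.sum_add_distrib, Finset.sum_congr rfl fun i _ => Nat.sub_add_cancel
      ((Finset.single_le_sum (fun j _ => Nat.zero_le (rowDeg N j)) (Finset.mem_univ i)).trans
        (Nat.le_add_left _ _)), Finset.sum_const, Finset.card_univ, Fintype.card_fin, smul_eq_mul]
  nlinarith

lemma hasFullSylvesterRank_iff_of_rank_add {e : ℕ}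
    (hrank : ∀ k, (sylv e k N).rank + m * (k - d) = k * (m + n)) (h1 : m * d ≤ n * e)
    (h2 : n * e < m * d + n) : HasFullSylvesterRank e N ↔ n * e = m * d := by
  constructor
  · intro hfull
    have hk := hfull (d + 1) le_add_self
    have hr := hrank (d + 1)
    rw [Nat.add_sub_cancel_left, mul_one] at hr
    rcases min_choice ((d + 1 + e) * n) ((d + 1) * (m + n)) with h | h <;> rw [h] at hk
    · nlinarith
    · obtain rfl : m = 0 := by omega
      obtain rfl : e = 0 := by nlinarith
      simp
  · intro heq k _
    have hr := hrank k
    rcases le_total k d with hkd | hdk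
    · rw [Nat.sub_eq_zero_of_le hkd, mul_zero, add_zero] at hr
      rw [hr, min_eq_right (by nlinarith)]
    · obtain ⟨j, rfl⟩ := Nat.exists_eq_add_of_le hdk
      rw [Nat.add_sub_cancel_left] at hr
      rw [min_eq_left (by nlinarith)]
      nlinarith

end Dual

lemma le_mul_ceil_div_and_lt {a b c : ℕ} (hb : 0 < b) (hc : c = ⌈(a : ℚ) / b⌉₊) :
    a ≤ b * c ∧ b * c < a + b := by
  have hbQ : (0 : ℚ) < b := by exact_mod_cast hb
  have h1 : (a : ℚ) / b ≤ c := hc ▸ Nat.le_ceil _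
  have h2 : (c : ℚ) < a / b + 1 := hc ▸ Nat.ceil_lt_add_one (by positivity)
  rw [div_le_iff₀ hbQ] at h1
  rw [← sub_lt_iff_lt_add, lt_div_iff₀ hbQ] at h2
  constructor
  · exact_mod_cast (by linarith : (a : ℚ) ≤ b * c)
  · exact_mod_cast (by linarith : (b * c : ℚ) < a + b)

lemma mul_eq_sum_iff_forall_eq {n e : ℕ} (hn : 0 < n) {f : Fin n → ℕ} (hf : ∀ i, f i ≤ e)
    (h2 : n * e < ∑ i, f i + n) : n * e = ∑ i, f i ↔ ∀ i j, f i = f j := by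
  constructor
  · intro h i j
    have hall := (Finset.sum_eq_sum_iff_of_le fun i _ => hf i).1
      (by rw [Finset.sum_const, Finset.card_univ, Fintype.card_fin, smul_eq_mul, h])
    rw [hall i (Finset.mem_univ _), hall j (Finset.mem_univ _)]
  · intro h
    have hsum : ∑ i, f i = n * f ⟨0, hn⟩ := by simp [fun i => h i ⟨0, hn⟩]
    have hle := hf ⟨0, hn⟩
    rw [hsum] at h2 ⊢
    have : e < f ⟨0, hn⟩ + 1 := by nlinarith
    rw [show e = f ⟨0, hn⟩ by omega]

theorem dual_hasFullSylvesterRank_iff_general {𝕜 : Type*} [RCLike 𝕜] {m n d : ℕ}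
    (hn : 0 < n)
    (M : Matrix (Fin m) (Fin (m + n)) 𝕜[X]) (hdeg : ∀ i j, (M i j).natDegree ≤ d)
    (hfull : HasFullSylvesterRank d M)
    (k' t : ℕ) (hk' : k' = ⌈(m * d : ℚ) / (n : ℚ)⌉₊) (ht : t = n * k' - m * d)
    (N : Matrix (Fin n) (Fin (m + n)) 𝕜[X]) (hNdeg : ∀ i j, (N i j).natDegree ≤ k')
    (hNmb : IsMinimalBasis N) (hdual : M * Nᵀ = 0) :
    (HasFullSylvesterRank k' N ↔ t = 0) ∧
    (HasFullSylvesterRank k' N ↔ ∀ i j : Fin n, rowDeg N i = rowDeg N j) := by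
  obtain ⟨h1, h2⟩ := le_mul_ceil_div_and_lt (a := m * d) (c := k') hn (by rw [hk', Nat.cast_mul])
  have hrank : ∀ k, (sylv k' k N).rank + m * (k - d) = k * (m + n) := fun k => by
    rw [← finrank_kerDegreeLT_eq_mul_of_dual hn hdeg hfull hNmb.1 hdual k]
    exact rank_sylv_add_finrank_kerDegreeLT k hNdeg
  have hfullN := hasFullSylvesterRank_iff_of_rank_add hrank h1 h2
  have hsum := sum_rowDeg_eq_of_dual hn hdeg hfull hNmb hdual
  have hrow := mul_eq_sum_iff_forall_eq (f := rowDeg N) hn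
    (fun i => Finset.sup_le fun a _ => hNdeg i a) (hsum ▸ h2)
  rw [hsum] at hrow
  exact ⟨hfullN.trans (by omega), hfullN.trans hrow⟩

/-- A minimal basis `N(λ)` dual to a full-Sylvester-rank matrix `M(λ)` has
full-Sylvester-rank (as a polynomial matrix of degree at most `k' = ⌈md/n⌉`) if and
only if `t = nk' - md = 0`, i.e. if and only if all the row degrees of `N(λ)` are
equal. -/
theorem dual_hasFullSylvesterRank_iff {𝕜 : Type*} [RCLike 𝕜] {m n d : ℕ}
    (hm : 0 < m) (hn : 0 < n) (hd : 0 < d)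
    (M : Matrix (Fin m) (Fin (m + n)) 𝕜[X]) (hdeg : ∀ i j, (M i j).natDegree ≤ d)
    (hfull : HasFullSylvesterRank d M)
    (k' t : ℕ) (hk' : k' = ⌈(m * d : ℚ) / (n : ℚ)⌉₊) (ht : t = n * k' - m * d)
    (N : Matrix (Fin n) (Fin (m + n)) 𝕜[X]) (hNdeg : ∀ i j, (N i j).natDegree ≤ k')
    (hNmb : IsMinimalBasis N) (hdual : M * Nᵀ = 0) :
    (HasFullSylvesterRank k' N ↔ t = 0) ∧
    (HasFullSylvesterRank k' N ↔ ∀ i j : Fin n, rowDeg N i = rowDeg N j) :=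
  dual_hasFullSylvesterRank_iff_general hn M hdeg hfull k' t hk' ht N hNdeg hNmb hdual

end
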